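/- arXiv:2208.07844 — 3 statements merged into one kernel-verified Lean document; each statement's English description precedes it below -/
import Mathlib

section
/- (Conditioning Lemma) Let A, B ⊂ {1,…,N} be disjoint with |A∪B| = k ≤ N−2 and fix σ_A ∈ {−1,1}^A. Then for every f : Σ_{N−k} → ℝ, ⟨f;f⟩_{[A,B]} ≤ (1 − 1/(N−k)) · a_{N−k−1} · D_{[A,B]}(f) + (1/(N−k)) Σ_{j∉A∪B} ⟨f;σ_j⟩²_{[A,B]} / (1 − (m_j^{[A,B]})²). -/
open Finset MeasureTheory ProbabilityTheory

noncomputable section SpinGlassDefs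

/-- The real spin value `±1` attached to a Boolean spin. -/
def spinVal (b : Bool) : ℝ := if b then 1 else -1

/-- Flip the `i`-th coordinate of a spin configuration. -/
def flipAt {N : ℕ} (i : Fin N) (σ : Fin N → Bool) : Fin N → Bool :=
  Function.update σ i (!σ i)

/-- Discrete partial derivative `(∂_i f)(σ) = (f(σ) - f(σ̂_i))/2`. -/
def dd {N : ℕ} (i : Fin N) (f : (Fin N → Bool) → ℝ) (σ : Fin N → Bool) : ℝ :=
  (f σ - f (flipAt i σ)) / 2

/-- The configuration agreeing with `σA` on `A` and with `σ` elsewhere. -/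
def comb {N : ℕ} (A : Finset (Fin N)) (σA σ : Fin N → Bool) : Fin N → Bool :=
  fun i => if i ∈ A then σA i else σ i

/-- `f` depends only on the coordinates in `S`. -/
def dependsOn {N : ℕ} (f : (Fin N → Bool) → ℝ) (S : Finset (Fin N)) : Prop :=
  ∀ σ τ : Fin N → Bool, (∀ i ∈ S, σ i = τ i) → f σ = f τ

/-- The `p`-spin interaction term of the reduced Hamiltonian `H_N^{[A,B]}`:
all indices range over `Bᶜ`, spins on `A` are frozen to `σA`. -/
def hamTerm (N : ℕ) (g : (p : ℕ) → (Fin p → Fin N) → ℝ) (βp : ℕ → ℝ)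
    (A B : Finset (Fin N)) (σA σ : Fin N → Bool) (p : ℕ) : ℝ :=
  if 2 ≤ p then
    (βp p / (N : ℝ) ^ (((p : ℝ) - 1) / 2)) *
      ∑ t : Fin p → Fin N,
        (if ∀ l, t l ∉ B then g p t * ∏ l, spinVal (comb A σA σ (t l)) else 0)
  else 0

/-- The reduced Hamiltonian `H_N^{[A,B]}` (with boundary condition `σA` on `A`,
the spins of `B` removed); `H_N` itself is the case `A = B = ∅`. -/
def ham (N : ℕ) (g : (p : ℕ) → (Fin p → Fin N) → ℝ) (βp : ℕ → ℝ) (η : Fin N → ℝ)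
    (A B : Finset (Fin N)) (σA σ : Fin N → Bool) : ℝ :=
  (∑' p : ℕ, hamTerm N g βp A B σA σ p) + ∑ i ∈ Bᶜ, η i * spinVal (comb A σA σ i)

/-- Absolute convergence of all the (reduced) Hamiltonians. -/
def HamSummable (N : ℕ) (g : (p : ℕ) → (Fin p → Fin N) → ℝ) (βp : ℕ → ℝ) : Prop :=
  ∀ (A B : Finset (Fin N)) (σA σ : Fin N → Bool),
    Summable fun p : ℕ => |hamTerm N g βp A B σA σ p|

/-- Gibbs expectation `⟨f⟩_{[A,B]}` of the reduced system.  (The sum runs over full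
configurations; since the integrands under consideration depend only on the coordinates
outside `A ∪ B`, the redundant multiplicity cancels between numerator and denominator.) -/
def gibbs (N : ℕ) (g : (p : ℕ) → (Fin p → Fin N) → ℝ) (βp : ℕ → ℝ) (η : Fin N → ℝ)
    (A B : Finset (Fin N)) (σA : Fin N → Bool) (f : (Fin N → Bool) → ℝ) : ℝ :=
  (∑ σ : Fin N → Bool, f σ * Real.exp (ham N g βp η A B σA σ)) /
    ∑ σ : Fin N → Bool, Real.exp (ham N g βp η A B σA σ)

/-- Gibbs covariance `⟨f;h⟩_{[A,B]}`. -/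
def gcov (N : ℕ) (g : (p : ℕ) → (Fin p → Fin N) → ℝ) (βp : ℕ → ℝ) (η : Fin N → ℝ)
    (A B : Finset (Fin N)) (σA : Fin N → Bool) (f h : (Fin N → Bool) → ℝ) : ℝ :=
  gibbs N g βp η A B σA (fun σ => f σ * h σ) -
    gibbs N g βp η A B σA f * gibbs N g βp η A B σA h

/-- The cavity field `B_j^{[A,B]} = σ_j ∂_j H_N^{[A,B]}`. -/
def cavity (N : ℕ) (g : (p : ℕ) → (Fin p → Fin N) → ℝ) (βp : ℕ → ℝ) (η : Fin N → ℝ)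
    (A B : Finset (Fin N)) (σA : Fin N → Bool) (j : Fin N) (σ : Fin N → Bool) : ℝ :=
  spinVal (σ j) * dd j (ham N g βp η A B σA) σ

/-- The weighted Dirichlet form `D_{[A,B]}(f)`. -/
def Dform (N : ℕ) (g : (p : ℕ) → (Fin p → Fin N) → ℝ) (βp : ℕ → ℝ) (η : Fin N → ℝ)
    (A B : Finset (Fin N)) (σA : Fin N → Bool) (f : (Fin N → Bool) → ℝ) : ℝ :=
  ∑ j ∈ (A ∪ B)ᶜ, gibbs N g βp η A B σA
    (fun σ => (Real.cosh (cavity N g βp η A B σA j σ))⁻¹ ^ 2 * dd j f σ ^ 2)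

/-- The inverse spectral gap `a_{[A,B]}`: supremum of `⟨f;f⟩_{[A,B]}/D_{[A,B]}(f)` over
nonconstant functions of the free spins. -/
def gap (N : ℕ) (g : (p : ℕ) → (Fin p → Fin N) → ℝ) (βp : ℕ → ℝ) (η : Fin N → ℝ)
    (A B : Finset (Fin N)) (σA : Fin N → Bool) : ℝ :=
  sSup {r : ℝ | ∃ f : (Fin N → Bool) → ℝ, dependsOn f ((A ∪ B)ᶜ) ∧
    (∃ σ τ : Fin N → Bool, f σ ≠ f τ) ∧
    r = gcov N g βp η A B σA f f / Dform N g βp η A B σA f}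

/-- `aSub k` is the maximal inverse spectral gap `a_{N-k}` over all subsystems with
`|A ∪ B| = k` and all boundary conditions `σA`. -/
def aSub (N : ℕ) (g : (p : ℕ) → (Fin p → Fin N) → ℝ) (βp : ℕ → ℝ) (η : Fin N → ℝ)
    (k : ℕ) : ℝ :=
  sSup {r : ℝ | ∃ (A B : Finset (Fin N)) (σA : Fin N → Bool),
    Disjoint A B ∧ (A ∪ B).card = k ∧ r = gap N g βp η A B σA}

/-- Magnetization `m_j^{[A,B]} = ⟨σ_j⟩_{[A,B]}`. -/
def mag (N : ℕ) (g : (p : ℕ) → (Fin p → Fin N) → ℝ) (βp : ℕ → ℝ) (η : Fin N → ℝ)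
    (A B : Finset (Fin N)) (σA : Fin N → Bool) (j : Fin N) : ℝ :=
  gibbs N g βp η A B σA (fun σ => spinVal (σ j))

/-- `β := Σ_{p ≥ 2} √(p³ log p) β_p`. -/
def betaTot (βp : ℕ → ℝ) : ℝ :=
  ∑' p : ℕ, if 2 ≤ p then Real.sqrt ((p : ℝ) ^ 3 * Real.log p) * βp p else 0

/-- `C_β = (10³ β)² exp(10³ β)`. -/
def Cbeta (β : ℝ) : ℝ := (10 ^ 3 * β) ^ 2 * Real.exp (10 ^ 3 * β)

/-- The ℓ² → ℓ² operator norm of a real matrix. -/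
def opNorm {n : Type} [Fintype n] [DecidableEq n] (M : Matrix n n ℝ) : ℝ :=
  ‖Matrix.toEuclideanCLM (𝕜 := ℝ) M‖

/-- The matrix `(∂_i B_j^{[A,B]}(σ))_{i,j ∉ A∪B}`. -/
def cavMatrix (N : ℕ) (g : (p : ℕ) → (Fin p → Fin N) → ℝ) (βp : ℕ → ℝ) (η : Fin N → ℝ)
    (A B : Finset (Fin N)) (σA σ : Fin N → Bool) :
    Matrix {i : Fin N // i ∈ (A ∪ B)ᶜ} {i : Fin N // i ∈ (A ∪ B)ᶜ} ℝ :=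
  Matrix.of fun i j => dd i.1 (cavity N g βp η A B σA j.1) σ

/-- The event/condition `Ω`: all the matrices `(∂_i B_j^{[A,B]})` have operator norm `≤ 5β`. -/
def OmegaCond (N : ℕ) (g : (p : ℕ) → (Fin p → Fin N) → ℝ) (βp : ℕ → ℝ) (η : Fin N → ℝ) : Prop :=
  ∀ (A B : Finset (Fin N)), Disjoint A B → ∀ (σA σ : Fin N → Bool),
    opNorm (cavMatrix N g βp η A B σA σ) ≤ 5 * betaTot βp

/-- The diagonal matrix `(Λ^{[A,B]})^{1/2} = diag((1-(m_i^{[A,B]})²)^{-1/2})`. -/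
def lambdaHalf (N : ℕ) (g : (p : ℕ) → (Fin p → Fin N) → ℝ) (βp : ℕ → ℝ) (η : Fin N → ℝ)
    (A B : Finset (Fin N)) (σA : Fin N → Bool) :
    Matrix {i : Fin N // i ∈ (A ∪ B)ᶜ} {i : Fin N // i ∈ (A ∪ B)ᶜ} ℝ :=
  Matrix.diagonal fun i => Real.sqrt (1 - mag N g βp η A B σA i.1 ^ 2)⁻¹

/-- The correlation matrix `M^{[A,B]} = (⟨σ_i;σ_j⟩_{[A,B]})_{i,j ∉ A∪B}`. -/
def corrM (N : ℕ) (g : (p : ℕ) → (Fin p → Fin N) → ℝ) (βp : ℕ → ℝ) (η : Fin N → ℝ)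
    (A B : Finset (Fin N)) (σA : Fin N → Bool) :
    Matrix {i : Fin N // i ∈ (A ∪ B)ᶜ} {i : Fin N // i ∈ (A ∪ B)ᶜ} ℝ :=
  Matrix.of fun i j =>
    gcov N g βp η A B σA (fun σ => spinVal (σ i.1)) (fun σ => spinVal (σ j.1))

/-- The conjugated correlation matrix `(Λ^{[A,B]})^{1/2} M^{[A,B]} (Λ^{[A,B]})^{1/2}`. -/
def conjCorr (N : ℕ) (g : (p : ℕ) → (Fin p → Fin N) → ℝ) (βp : ℕ → ℝ) (η : Fin N → ℝ)
    (A B : Finset (Fin N)) (σA : Fin N → Bool) :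
    Matrix {i : Fin N // i ∈ (A ∪ B)ᶜ} {i : Fin N // i ∈ (A ∪ B)ᶜ} ℝ :=
  lambdaHalf N g βp η A B σA * corrM N g βp η A B σA * lambdaHalf N g βp η A B σA

/-- `h_j^{[A,B]} = (σ_j - m_j^{[A,B]}) - e^{-2σ_j B_j^{[A,B]}}(σ_j + m_j^{[A,B]})`. -/
def hfun (N : ℕ) (g : (p : ℕ) → (Fin p → Fin N) → ℝ) (βp : ℕ → ℝ) (η : Fin N → ℝ)
    (A B : Finset (Fin N)) (σA : Fin N → Bool) (j : Fin N) (σ : Fin N → Bool) : ℝ :=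
  (spinVal (σ j) - mag N g βp η A B σA j) -
    Real.exp (-2 * spinVal (σ j) * cavity N g βp η A B σA j σ) *
      (spinVal (σ j) + mag N g βp η A B σA j)

/-- The matrix `S^{[A,B]}`. -/
def Smatrix (N : ℕ) (g : (p : ℕ) → (Fin p → Fin N) → ℝ) (βp : ℕ → ℝ) (η : Fin N → ℝ)
    (A B : Finset (Fin N)) (σA : Fin N → Bool) :
    Matrix {i : Fin N // i ∈ (A ∪ B)ᶜ} {i : Fin N // i ∈ (A ∪ B)ᶜ} ℝ :=
  Matrix.of fun i j =>
    gcov N g βp η A B σA (hfun N g βp η A B σA i.1) (hfun N g βp η A B σA j.1) /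
      (Real.sqrt (1 - mag N g βp η A B σA i.1 ^ 2) *
        Real.sqrt (1 - mag N g βp η A B σA j.1 ^ 2))

/-- The couplings `g` form an i.i.d. family of standard Gaussian random variables
(indexed by all tuples of pairwise distinct indices, for all `p ≥ 2`), and vanish on
tuples with coinciding indices. -/
def IsIIDGaussianCouplings {Ω' : Type} [MeasurableSpace Ω'] (P : Measure Ω') (N : ℕ)
    (g : Ω' → (p : ℕ) → (Fin p → Fin N) → ℝ) : Prop :=
  (∀ (p : ℕ) (t : Fin p → Fin N), Measurable fun ω => g ω p t) ∧
  (∀ ω (p : ℕ) (t : Fin p → Fin N), ¬ Function.Injective t → g ω p t = 0) ∧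
  (∀ (p : ℕ) (t : Fin p → Fin N), 2 ≤ p → Function.Injective t →
    Measure.map (fun ω => g ω p t) P = gaussianReal 0 1) ∧
  iIndepFun
    (m := fun _ : {pt : (p : ℕ) × (Fin p → Fin N) // 2 ≤ pt.1 ∧ Function.Injective pt.2} =>
      Real.measurableSpace)
    (fun i ω => g ω i.1.1 i.1.2) P

end SpinGlassDefs
noncomputable section CondLemma
variable {N : ℕ} (g : (p : ℕ) → (Fin p → Fin N) → ℝ) (βp : ℕ → ℝ) (η : Fin N → ℝ)
  (A B : Finset (Fin N)) (σA : Fin N → Bool)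

/-- partition function -/
def Zfun : ℝ := ∑ σ : Fin N → Bool, Real.exp (ham N g βp η A B σA σ)

lemma Zfun_pos : 0 < Zfun g βp η A B σA :=
  Finset.sum_pos (fun _ _ => Real.exp_pos _) univ_nonempty

lemma gibbs_eq (F : (Fin N → Bool) → ℝ) :
    gibbs N g βp η A B σA F =
      (∑ σ : Fin N → Bool, F σ * Real.exp (ham N g βp η A B σA σ)) / Zfun g βp η A B σA := rfl

lemma gibbs_nonneg {F : (Fin N → Bool) → ℝ} (hF : ∀ σ, 0 ≤ F σ) :
    0 ≤ gibbs N g βp η A B σA F := by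
  rw [gibbs_eq]
  exact div_nonneg (Finset.sum_nonneg fun σ _ => mul_nonneg (hF σ) (Real.exp_pos _).le)
    (Zfun_pos g βp η A B σA).le

lemma gibbs_const (c : ℝ) : gibbs N g βp η A B σA (fun _ => c) = c := by
  rw [gibbs_eq, ← Finset.mul_sum]
  exact mul_div_cancel_right₀ c (Zfun_pos g βp η A B σA).ne'

lemma comb_insert {j : Fin N} (hj : j ∉ A) (b : Bool) (σ : Fin N → Bool) :
    comb (insert j A) (Function.update σA j b) σ = comb A σA (Function.update σ j b) := by
  funext i
  unfold comb
  rcases eq_or_ne i j with rfl | hij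
  · simp [hj]
  · by_cases hiA : i ∈ A <;> simp [hiA, hij, Function.update_of_ne hij]

lemma ham_insert {j : Fin N} (hj : j ∉ A) (b : Bool) (σ : Fin N → Bool) :
    ham N g βp η (insert j A) B (Function.update σA j b) σ
      = ham N g βp η A B σA (Function.update σ j b) := by
  unfold ham hamTerm
  rw [comb_insert A σA hj b σ]

set_option maxHeartbeats 1000000 in
lemma update_piSplitAt (j : Fin N) (c b : Bool) (ρ : (i : {i // i ≠ j}) → Bool) :
    Function.update ((Equiv.piSplitAt j (fun _ => Bool)).symm (c, ρ)) j b
      = (Equiv.piSplitAt j (fun _ => Bool)).symm (b, ρ) := by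
  funext a
  rcases eq_or_ne a j with rfl | ha
  · simp [Equiv.piSplitAt]
  · simp [Equiv.piSplitAt, Function.update_of_ne ha, ha]

set_option maxHeartbeats 1000000 in
lemma sum_split (j : Fin N) (G : (Fin N → Bool) → ℝ) :
    ∑ σ : Fin N → Bool, G σ =
      (∑ σ : Fin N → Bool, G (Function.update σ j true)
        + ∑ σ : Fin N → Bool, G (Function.update σ j false)) / 2 := by
  have key : ∀ b : Bool, ∑ σ : Fin N → Bool, G (Function.update σ j b)
      = 2 * ∑ ρ : (i : {i // i ≠ j}) → Bool,
          G ((Equiv.piSplitAt j (fun _ => Bool)).symm (b, ρ)) := by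
    intro b
    rw [← Equiv.sum_comp (Equiv.piSplitAt j (fun _ => Bool)).symm
      (fun σ => G (Function.update σ j b)), Fintype.sum_prod_type]
    simp only [update_piSplitAt]
    rw [Fintype.sum_bool]
    ring
  have key0 : ∑ σ : Fin N → Bool, G σ
      = ∑ ρ, G ((Equiv.piSplitAt j (fun _ => Bool)).symm (true, ρ))
        + ∑ ρ, G ((Equiv.piSplitAt j (fun _ => Bool)).symm (false, ρ)) := by
    rw [← Equiv.sum_comp (Equiv.piSplitAt j (fun _ => Bool)).symm G, Fintype.sum_prod_type,
      Fintype.sum_bool]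
  rw [key0, key true, key false]
  ring

/-- conditional partition function -/
def Zb (j : Fin N) (b : Bool) : ℝ :=
  ∑ σ : Fin N → Bool, Real.exp (ham N g βp η A B σA (Function.update σ j b))

lemma Zb_pos (j : Fin N) (b : Bool) : 0 < Zb g βp η A B σA j b :=
  Finset.sum_pos (fun _ _ => Real.exp_pos _) univ_nonempty

lemma Zb_eq (j : Fin N) (hj : j ∉ A) (b : Bool) :
    Zb g βp η A B σA j b = Zfun g βp η (insert j A) B (Function.update σA j b) := by
  unfold Zb Zfun
  exact (Finset.sum_congr rfl fun σ _ => by rw [ham_insert g βp η A B σA hj]).symm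

/-- conditional weight -/
def wgt (j : Fin N) (b : Bool) : ℝ :=
  Zb g βp η A B σA j b / (Zb g βp η A B σA j true + Zb g βp η A B σA j false)

lemma wgt_pos (j : Fin N) (b : Bool) : 0 < wgt g βp η A B σA j b :=
  div_pos (Zb_pos g βp η A B σA j b)
    (add_pos (Zb_pos g βp η A B σA j true) (Zb_pos g βp η A B σA j false))

lemma wgt_sum (j : Fin N) : wgt g βp η A B σA j true + wgt g βp η A B σA j false = 1 := by
  unfold wgt
  rw [← add_div, div_self]
  exact (add_pos (Zb_pos g βp η A B σA j true) (Zb_pos g βp η A B σA j false)).ne'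

/-- the tower property -/
lemma tower (j : Fin N) (hj : j ∉ A) (F : (Fin N → Bool) → ℝ) :
    gibbs N g βp η A B σA F
      = wgt g βp η A B σA j true *
          gibbs N g βp η (insert j A) B (Function.update σA j true)
            (fun σ => F (Function.update σ j true))
        + wgt g βp η A B σA j false *
          gibbs N g βp η (insert j A) B (Function.update σA j false)
            (fun σ => F (Function.update σ j false)) := by
  have hgb : ∀ b : Bool,
      gibbs N g βp η (insert j A) B (Function.update σA j b)
        (fun σ => F (Function.update σ j b))
      = (∑ σ : Fin N → Bool, F (Function.update σ j b) *
          Real.exp (ham N g βp η A B σA (Function.update σ j b))) / Zb g βp η A B σA j b := by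
    intro b
    have hnum : (∑ σ : Fin N → Bool, F (Function.update σ j b) *
        Real.exp (ham N g βp η (insert j A) B (Function.update σA j b) σ))
        = ∑ σ : Fin N → Bool, F (Function.update σ j b) *
          Real.exp (ham N g βp η A B σA (Function.update σ j b)) :=
      Finset.sum_congr rfl fun σ _ => by rw [ham_insert g βp η A B σA hj]
    rw [gibbs_eq, hnum, ← Zb_eq g βp η A B σA j hj b]
  rw [gibbs_eq, hgb true, hgb false]
  set nt := ∑ σ : Fin N → Bool, F (Function.update σ j true) *
      Real.exp (ham N g βp η A B σA (Function.update σ j true)) with hnt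
  set nf := ∑ σ : Fin N → Bool, F (Function.update σ j false) *
      Real.exp (ham N g βp η A B σA (Function.update σ j false)) with hnf
  have hZ : Zfun g βp η A B σA = (Zb g βp η A B σA j true + Zb g βp η A B σA j false) / 2 :=
    sum_split j _
  have hN : (∑ σ : Fin N → Bool, F σ * Real.exp (ham N g βp η A B σA σ)) = (nt + nf) / 2 :=
    sum_split j _
  rw [hZ, hN]
  unfold wgt
  have ht := Zb_pos g βp η A B σA j true
  have hf := Zb_pos g βp η A B σA j false
  have hs : (0:ℝ) < Zb g βp η A B σA j true + Zb g βp η A B σA j false := by linarith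
  field_simp

lemma spinVal_true : spinVal true = 1 := rfl
lemma spinVal_false : spinVal false = -1 := rfl

lemma gibbs_neg (F : (Fin N → Bool) → ℝ) :
    gibbs N g βp η A B σA (fun σ => -F σ) = - gibbs N g βp η A B σA F := by
  rw [gibbs_eq, gibbs_eq, ← neg_div, ← Finset.sum_neg_distrib]
  congr 1
  exact Finset.sum_congr rfl fun σ _ => by ring

lemma totvar_alg (s t a b X Y : ℝ) (hs : 0 < s) (ht : 0 < t) (hst : s + t = 1) :
    s*X + t*Y - (s*a + t*b)^2
      = s*(X - a*a) + t*(Y - b*b)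
        + ((s*a + t*(-b)) - (s*a + t*b)*(s + t*(-1)))^2 / (1 - (s + t*(-1))^2) := by
  have hd : 1 - (s + t*(-1))^2 = 4*(s*t) := by linear_combination (-(s+t+1)) * hst
  rw [hd]
  have h1 : t = 1 - s := by linarith
  subst h1
  have h2 : s ≠ 0 := hs.ne'
  have h3 : (1:ℝ) - s ≠ 0 := by linarith
  field_simp
  ring

lemma cond_variance (j : Fin N) (hj : j ∉ A) (f : (Fin N → Bool) → ℝ) :
    gcov N g βp η A B σA f f
      = wgt g βp η A B σA j true *
          gcov N g βp η (insert j A) B (Function.update σA j true)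
            (fun σ => f (Function.update σ j true)) (fun σ => f (Function.update σ j true))
        + wgt g βp η A B σA j false *
          gcov N g βp η (insert j A) B (Function.update σA j false)
            (fun σ => f (Function.update σ j false)) (fun σ => f (Function.update σ j false))
        + gcov N g βp η A B σA f (fun σ => spinVal (σ j)) ^ 2
            / (1 - mag N g βp η A B σA j ^ 2) := by
  have h1 := tower g βp η A B σA j hj f
  have h2 := tower g βp η A B σA j hj (fun σ => f σ * f σ)
  have h3 := tower g βp η A B σA j hj (fun σ => f σ * spinVal (σ j))
  have h4 := tower g βp η A B σA j hj (fun σ => spinVal (σ j))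
  beta_reduce at h2 h3 h4
  simp only [Function.update_self, spinVal_true, spinVal_false, mul_one, mul_neg_one] at h3 h4
  simp only [gibbs_neg, gibbs_const] at h3 h4
  unfold gcov mag
  beta_reduce
  rw [h1, h2, h3, h4]
  have hs := wgt_pos g βp η A B σA j true
  have ht := wgt_pos g βp η A B σA j false
  have hst := wgt_sum g βp η A B σA j
  set s := wgt g βp η A B σA j true
  set t := wgt g βp η A B σA j false
  set a := gibbs N g βp η (insert j A) B (Function.update σA j true)
      (fun σ => f (Function.update σ j true))
  set b := gibbs N g βp η (insert j A) B (Function.update σA j false)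
      (fun σ => f (Function.update σ j false))
  set X := gibbs N g βp η (insert j A) B (Function.update σA j true)
      (fun σ => f (Function.update σ j true) * f (Function.update σ j true))
  set Y := gibbs N g βp η (insert j A) B (Function.update σA j false)
      (fun σ => f (Function.update σ j false) * f (Function.update σ j false))
  linear_combination totvar_alg s t a b X Y hs ht hst

lemma gibbs_congr {F G : (Fin N → Bool) → ℝ} (h : ∀ σ, F σ = G σ) :
    gibbs N g βp η A B σA F = gibbs N g βp η A B σA G := by
  rw [funext h]

lemma update_flipAt (l j : Fin N) (hlj : l ≠ j) (b : Bool) (σ : Fin N → Bool) :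
    Function.update (flipAt l σ) j b = flipAt l (Function.update σ j b) := by
  unfold flipAt
  rw [Function.update_of_ne hlj, Function.update_comm (hlj.symm)]

lemma dd_update (l j : Fin N) (hlj : l ≠ j) (b : Bool) (F : (Fin N → Bool) → ℝ)
    (σ : Fin N → Bool) :
    dd l (fun σ => F (Function.update σ j b)) σ = dd l F (Function.update σ j b) := by
  unfold dd
  beta_reduce
  rw [update_flipAt l j hlj]

lemma cavity_insert (j : Fin N) (hj : j ∉ A) (l : Fin N) (hlj : l ≠ j) (b : Bool)
    (σ : Fin N → Bool) :
    cavity N g βp η (insert j A) B (Function.update σA j b) l σ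
      = cavity N g βp η A B σA l (Function.update σ j b) := by
  unfold cavity dd
  rw [ham_insert g βp η A B σA hj, ham_insert g βp η A B σA hj, update_flipAt l j hlj,
    Function.update_of_ne hlj]

set_option maxHeartbeats 2000000 in
lemma dform_decomp (j : Fin N) (hj : j ∈ (A ∪ B)ᶜ) (f : (Fin N → Bool) → ℝ) :
    wgt g βp η A B σA j true *
        Dform N g βp η (insert j A) B (Function.update σA j true)
          (fun σ => f (Function.update σ j true))
      + wgt g βp η A B σA j false *
        Dform N g βp η (insert j A) B (Function.update σA j false)
          (fun σ => f (Function.update σ j false))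
      = Dform N g βp η A B σA f
        - gibbs N g βp η A B σA
            (fun σ => (Real.cosh (cavity N g βp η A B σA j σ))⁻¹ ^ 2 * dd j f σ ^ 2) := by
  have hjA : j ∉ A := fun h => (Finset.mem_compl.1 hj) (Finset.mem_union_left B h)
  have hset : ((insert j A) ∪ B)ᶜ = ((A ∪ B)ᶜ).erase j := by
    rw [Finset.insert_union, Finset.compl_insert]
  have hint : ∀ (b : Bool), ∀ l ∈ ((A ∪ B)ᶜ).erase j,
      gibbs N g βp η (insert j A) B (Function.update σA j b)
        (fun σ => (Real.cosh (cavity N g βp η (insert j A) B (Function.update σA j b) l σ))⁻¹ ^ 2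
          * dd l (fun σ => f (Function.update σ j b)) σ ^ 2)
      = gibbs N g βp η (insert j A) B (Function.update σA j b)
          (fun σ => (fun τ => (Real.cosh (cavity N g βp η A B σA l τ))⁻¹ ^ 2
            * dd l f τ ^ 2) (Function.update σ j b)) := by
    intro b l hl
    have hlj : l ≠ j := (Finset.mem_erase.1 hl).1
    apply gibbs_congr
    intro σ
    rw [cavity_insert g βp η A B σA j hjA l hlj b σ, dd_update l j hlj b f σ]
  have hDb : ∀ b : Bool,
      Dform N g βp η (insert j A) B (Function.update σA j b)
        (fun σ => f (Function.update σ j b))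
      = ∑ l ∈ ((A ∪ B)ᶜ).erase j,
          gibbs N g βp η (insert j A) B (Function.update σA j b)
            (fun σ => (fun τ => (Real.cosh (cavity N g βp η A B σA l τ))⁻¹ ^ 2
              * dd l f τ ^ 2) (Function.update σ j b)) := by
    intro b
    unfold Dform
    rw [hset]
    exact Finset.sum_congr rfl (hint b)
  rw [hDb true, hDb false, Finset.mul_sum, Finset.mul_sum, ← Finset.sum_add_distrib]
  have hper : ∀ l ∈ ((A ∪ B)ᶜ).erase j,
      wgt g βp η A B σA j true *
        gibbs N g βp η (insert j A) B (Function.update σA j true)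
          (fun σ => (fun τ => (Real.cosh (cavity N g βp η A B σA l τ))⁻¹ ^ 2
            * dd l f τ ^ 2) (Function.update σ j true))
      + wgt g βp η A B σA j false *
        gibbs N g βp η (insert j A) B (Function.update σA j false)
          (fun σ => (fun τ => (Real.cosh (cavity N g βp η A B σA l τ))⁻¹ ^ 2
            * dd l f τ ^ 2) (Function.update σ j false))
      = gibbs N g βp η A B σA
          (fun τ => (Real.cosh (cavity N g βp η A B σA l τ))⁻¹ ^ 2 * dd l f τ ^ 2) := by
    intro l _
    exact (tower g βp η A B σA j hjA
      (fun τ => (Real.cosh (cavity N g βp η A B σA l τ))⁻¹ ^ 2 * dd l f τ ^ 2)).symm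
  rw [Finset.sum_congr rfl hper]
  have hadd := Finset.sum_erase_add ((A ∪ B)ᶜ)
    (fun l => gibbs N g βp η A B σA
      (fun τ => (Real.cosh (cavity N g βp η A B σA l τ))⁻¹ ^ 2 * dd l f τ ^ 2)) hj
  have hDf : Dform N g βp η A B σA f = ∑ l ∈ (A ∪ B)ᶜ, gibbs N g βp η A B σA
      (fun τ => (Real.cosh (cavity N g βp η A B σA l τ))⁻¹ ^ 2 * dd l f τ ^ 2) := rfl
  rw [hDf]
  exact eq_sub_of_add_eq hadd

/-- total derivative energy -/
def Qen (S : Finset (Fin N)) (f : (Fin N → Bool) → ℝ) : ℝ :=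
  ∑ l ∈ S, ∑ ρ : Fin N → Bool, dd l f ρ ^ 2

lemma Qen_nonneg (S : Finset (Fin N)) (f : (Fin N → Bool) → ℝ) : 0 ≤ Qen S f :=
  Finset.sum_nonneg fun _ _ => Finset.sum_nonneg fun _ _ => sq_nonneg _

lemma double_sum_var (c F : (Fin N → Bool) → ℝ) :
    ∑ σ : Fin N → Bool, ∑ τ : Fin N → Bool, c σ * c τ * (F σ - F τ) ^ 2
      = 2 * ((∑ σ : Fin N → Bool, c σ) * (∑ σ : Fin N → Bool, F σ * F σ * c σ)
          - (∑ σ : Fin N → Bool, F σ * c σ) ^ 2) := by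
  have h : ∀ σ τ : Fin N → Bool, c σ * c τ * (F σ - F τ) ^ 2
      = (F σ * F σ * c σ) * c τ - 2 * ((F σ * c σ) * (F τ * c τ)) + c σ * (F τ * F τ * c τ) := by
    intro σ τ; ring
  simp only [h, Finset.sum_add_distrib, Finset.sum_sub_distrib, ← Finset.mul_sum,
    ← Finset.sum_mul]
  ring

lemma gcov_self_eq (f : (Fin N → Bool) → ℝ) :
    gcov N g βp η A B σA f f
      = (∑ σ : Fin N → Bool, ∑ τ : Fin N → Bool,
          Real.exp (ham N g βp η A B σA σ) * Real.exp (ham N g βp η A B σA τ)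
            * (f σ - f τ) ^ 2) / (2 * Zfun g βp η A B σA ^ 2) := by
  rw [double_sum_var (fun σ => Real.exp (ham N g βp η A B σA σ)) f]
  have hZ := Zfun_pos g βp η A B σA
  unfold gcov
  rw [gibbs_eq, gibbs_eq]
  have hZfun : (∑ σ : Fin N → Bool, Real.exp (ham N g βp η A B σA σ)) = Zfun g βp η A B σA := rfl
  rw [hZfun]
  field_simp

lemma gcov_self_nonneg (f : (Fin N → Bool) → ℝ) : 0 ≤ gcov N g βp η A B σA f f := by
  rw [gcov_self_eq]
  apply div_nonneg
  · exact Finset.sum_nonneg fun σ _ => Finset.sum_nonneg fun τ _ =>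
      mul_nonneg (mul_nonneg (Real.exp_pos _).le (Real.exp_pos _).le) (sq_nonneg _)
  · positivity

/-- interpolation chain between two configurations -/
def chain (σ τ : Fin N → Bool) (i : ℕ) : Fin N → Bool :=
  fun l => if (l : ℕ) < i then τ l else σ l

lemma chain_zero (σ τ : Fin N → Bool) : chain σ τ 0 = σ :=
  funext fun l => if_neg (Nat.not_lt_zero _)

lemma chain_top (σ τ : Fin N → Bool) : chain σ τ N = τ :=
  funext fun l => if_pos l.isLt

lemma chain_succ_ne (σ τ : Fin N → Bool) (i : ℕ) (l : Fin N) (hl : (l : ℕ) ≠ i) :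
    chain σ τ i l = chain σ τ (i + 1) l := by
  unfold chain
  rcases lt_or_ge (l : ℕ) i with h | h
  · rw [if_pos h, if_pos (by omega)]
  · rw [if_neg (by omega), if_neg (by omega)]

lemma path_bound {S : Finset (Fin N)} {f : (Fin N → Bool) → ℝ} (hf : dependsOn f S)
    (σ τ : Fin N → Bool) :
    (f σ - f τ) ^ 2 ≤ 4 * (N : ℝ) ^ 2 * Qen S f := by
  have tele : f σ - f τ
      = ∑ i ∈ Finset.range N, (f (chain σ τ i) - f (chain σ τ (i + 1))) := by
    rw [Finset.sum_range_sub' (fun i => f (chain σ τ i)) N, chain_zero, chain_top]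
  have step : ∀ i ∈ Finset.range N,
      (f (chain σ τ i) - f (chain σ τ (i + 1))) ^ 2 ≤ 4 * Qen S f := by
    intro i hi
    have hiN : i < N := Finset.mem_range.1 hi
    set i' : Fin N := ⟨i, hiN⟩ with hi'
    have hQ := Qen_nonneg S f
    by_cases hστ : σ i' = τ i'
    · have heq : chain σ τ i = chain σ τ (i + 1) := by
        funext l
        rcases eq_or_ne (l : ℕ) i with hl | hl
        · have hli : l = i' := Fin.ext hl
          subst hli
          unfold chain
          rw [if_neg (by omega), if_pos (by omega), hστ]
        · exact chain_succ_ne σ τ i l hl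
      rw [heq, sub_self]
      nlinarith
    · by_cases hiS : i' ∈ S
      · have hflip : chain σ τ i = flipAt i' (chain σ τ (i + 1)) := by
          funext l
          unfold flipAt
          rcases eq_or_ne l i' with rfl | hl
          · rw [Function.update_self]
            have hcoe : (i' : ℕ) = i := rfl
            have hv : chain σ τ (i + 1) i' = τ i' := if_pos (by omega)
            have hv' : chain σ τ i i' = σ i' := if_neg (by omega)
            rw [hv, hv']
            revert hστ; cases σ i' <;> cases τ i' <;> simp_all
          · rw [Function.update_of_ne hl]
            exact chain_succ_ne σ τ i l (fun h => hl (Fin.ext h))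
        have hdd : f (chain σ τ i) - f (chain σ τ (i + 1))
            = -(2 * dd i' f (chain σ τ (i + 1))) := by
          rw [hflip]; unfold dd; ring
        rw [hdd]
        have h1 : dd i' f (chain σ τ (i + 1)) ^ 2
            ≤ ∑ ρ : Fin N → Bool, dd i' f ρ ^ 2 :=
          Finset.single_le_sum (f := fun ρ => dd i' f ρ ^ 2)
            (fun ρ _ => sq_nonneg _) (Finset.mem_univ _)
        have h2 : (∑ ρ : Fin N → Bool, dd i' f ρ ^ 2) ≤ Qen S f :=
          Finset.single_le_sum (f := fun l => ∑ ρ : Fin N → Bool, dd l f ρ ^ 2)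
            (fun l _ => Finset.sum_nonneg fun ρ _ => sq_nonneg _) hiS
        nlinarith
      · have heq : f (chain σ τ i) = f (chain σ τ (i + 1)) := by
          apply hf
          intro l hl
          exact chain_succ_ne σ τ i l (fun h => hiS ((Fin.ext h : l = i') ▸ hl))
        rw [heq, sub_self]
        nlinarith
  have csq : (f σ - f τ) ^ 2 ≤ (N : ℝ) * ∑ i ∈ Finset.range N,
      (f (chain σ τ i) - f (chain σ τ (i + 1))) ^ 2 := by
    rw [tele]
    have := Finset.sum_mul_sq_le_sq_mul_sq (Finset.range N)
      (fun i => f (chain σ τ i) - f (chain σ τ (i + 1))) (fun _ => (1 : ℝ))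
    simp only [mul_one, one_pow] at this
    calc (∑ i ∈ Finset.range N, (f (chain σ τ i) - f (chain σ τ (i + 1)))) ^ 2
        ≤ (∑ i ∈ Finset.range N, (f (chain σ τ i) - f (chain σ τ (i + 1))) ^ 2)
          * ∑ _i ∈ Finset.range N, (1:ℝ) := this
      _ = (N : ℝ) * ∑ i ∈ Finset.range N, (f (chain σ τ i) - f (chain σ τ (i + 1))) ^ 2 := by
          simp [Finset.sum_const, mul_comm]
  have hsum : (∑ i ∈ Finset.range N, (f (chain σ τ i) - f (chain σ τ (i + 1))) ^ 2)
      ≤ (N : ℝ) * (4 * Qen S f) := by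
    calc (∑ i ∈ Finset.range N, (f (chain σ τ i) - f (chain σ τ (i + 1))) ^ 2)
        ≤ ∑ _i ∈ Finset.range N, 4 * Qen S f := Finset.sum_le_sum step
      _ = (N : ℝ) * (4 * Qen S f) := by simp [Finset.sum_const]
  have hN0 : (0:ℝ) ≤ (N : ℝ) := Nat.cast_nonneg N
  nlinarith

lemma gcov_self_le (f : (Fin N → Bool) → ℝ) (hf : dependsOn f ((A ∪ B)ᶜ)) :
    gcov N g βp η A B σA f f ≤ 2 * (N : ℝ) ^ 2 * Qen ((A ∪ B)ᶜ) f := by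
  rw [gcov_self_eq]
  have hZ := Zfun_pos g βp η A B σA
  rw [div_le_iff₀ (by positivity)]
  have hbd : ∑ σ : Fin N → Bool, ∑ τ : Fin N → Bool,
      Real.exp (ham N g βp η A B σA σ) * Real.exp (ham N g βp η A B σA τ) * (f σ - f τ) ^ 2
      ≤ ∑ σ : Fin N → Bool, ∑ τ : Fin N → Bool,
        Real.exp (ham N g βp η A B σA σ) * Real.exp (ham N g βp η A B σA τ)
          * (4 * (N : ℝ) ^ 2 * Qen ((A ∪ B)ᶜ) f) := by
    apply Finset.sum_le_sum; intro σ _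
    apply Finset.sum_le_sum; intro τ _
    exact mul_le_mul_of_nonneg_left (path_bound hf σ τ)
      (mul_nonneg (Real.exp_pos _).le (Real.exp_pos _).le)
  have heq : ∑ σ : Fin N → Bool, ∑ τ : Fin N → Bool,
      Real.exp (ham N g βp η A B σA σ) * Real.exp (ham N g βp η A B σA τ)
        * (4 * (N : ℝ) ^ 2 * Qen ((A ∪ B)ᶜ) f)
      = 4 * (N : ℝ) ^ 2 * Qen ((A ∪ B)ᶜ) f * Zfun g βp η A B σA ^ 2 := by
    have hin : ∀ σ : Fin N → Bool, (∑ τ : Fin N → Bool,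
        Real.exp (ham N g βp η A B σA σ) * Real.exp (ham N g βp η A B σA τ)
          * (4 * (N : ℝ) ^ 2 * Qen ((A ∪ B)ᶜ) f))
        = Real.exp (ham N g βp η A B σA σ)
            * (Zfun g βp η A B σA * (4 * (N : ℝ) ^ 2 * Qen ((A ∪ B)ᶜ) f)) := by
      intro σ
      simp_rw [mul_assoc]
      rw [← Finset.mul_sum, ← Finset.sum_mul]
      rfl
    rw [Finset.sum_congr rfl fun σ _ => hin σ, ← Finset.sum_mul]
    show Zfun g βp η A B σA * _ = _
    ring
  calc _ ≤ _ := hbd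
    _ = _ := heq
    _ ≤ 2 * (N : ℝ) ^ 2 * Qen ((A ∪ B)ᶜ) f * (2 * Zfun g βp η A B σA ^ 2) :=
        le_of_eq (by ring)

lemma Dform_nonneg (f : (Fin N → Bool) → ℝ) : 0 ≤ Dform N g βp η A B σA f :=
  Finset.sum_nonneg fun j _ => gibbs_nonneg g βp η A B σA
    (fun σ => mul_nonneg (pow_two_nonneg _) (sq_nonneg _))

lemma Dform_ge : ∃ ε > (0:ℝ), ∀ f : (Fin N → Bool) → ℝ,
    ε * Qen ((A ∪ B)ᶜ) f ≤ Dform N g βp η A B σA f := by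
  have hZ := Zfun_pos g βp η A B σA
  set W : Fin N × (Fin N → Bool) → ℝ := fun x =>
    (Real.cosh (cavity N g βp η A B σA x.1 x.2))⁻¹ ^ 2
      * Real.exp (ham N g βp η A B σA x.2) / Zfun g βp η A B σA with hW
  have hWpos : ∀ x, 0 < W x := by
    intro x
    apply div_pos _ hZ
    apply mul_pos _ (Real.exp_pos _)
    have := Real.cosh_pos (x := cavity N g βp η A B σA x.1 x.2)
    positivity
  have hDW : ∀ f : (Fin N → Bool) → ℝ, Dform N g βp η A B σA f
      = ∑ l ∈ (A ∪ B)ᶜ, ∑ ρ : Fin N → Bool, W (l, ρ) * dd l f ρ ^ 2 := by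
    intro f
    unfold Dform
    apply Finset.sum_congr rfl
    intro l _
    rw [gibbs_eq, Finset.sum_div]
    apply Finset.sum_congr rfl
    intro ρ _
    rw [hW]
    ring
  by_cases hne : ((A ∪ B)ᶜ : Finset (Fin N)).Nonempty
  · obtain ⟨x, hx, hmin⟩ := Finset.exists_min_image ((A ∪ B)ᶜ ×ˢ Finset.univ) W
      (hne.product ⟨_, Finset.mem_univ (fun _ => true)⟩)
    refine ⟨W x, hWpos x, fun f => ?_⟩
    rw [hDW f]
    unfold Qen
    rw [Finset.mul_sum]
    apply Finset.sum_le_sum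
    intro l hl
    rw [Finset.mul_sum]
    apply Finset.sum_le_sum
    intro ρ _
    exact mul_le_mul_of_nonneg_right
      (hmin (l, ρ) (Finset.mem_product.2 ⟨hl, Finset.mem_univ _⟩)) (sq_nonneg _)
  · refine ⟨1, one_pos, fun f => ?_⟩
    have he := Finset.not_nonempty_iff_eq_empty.1 hne
    unfold Qen Dform
    rw [he]
    simp

lemma gapSet_bddAbove : BddAbove {r : ℝ | ∃ f : (Fin N → Bool) → ℝ,
    dependsOn f ((A ∪ B)ᶜ) ∧ (∃ σ τ : Fin N → Bool, f σ ≠ f τ) ∧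
    r = gcov N g βp η A B σA f f / Dform N g βp η A B σA f} := by
  obtain ⟨ε, hε, hD⟩ := Dform_ge g βp η A B σA
  refine ⟨max (2 * (N:ℝ)^2 / ε) 0, fun r hr => ?_⟩
  obtain ⟨f, hdep, -, rfl⟩ := hr
  have h1 := gcov_self_le g βp η A B σA f hdep
  have h2 := hD f
  have hQ := Qen_nonneg ((A ∪ B)ᶜ) f
  rcases (Dform_nonneg g βp η A B σA f).eq_or_lt with h0 | h0
  · rw [← h0, div_zero]
    exact le_max_right _ _
  · rw [div_le_iff₀ h0]
    have hC : 2 * (N:ℝ)^2 / ε ≤ max (2 * (N:ℝ)^2 / ε) 0 := le_max_left _ _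
    have key : 2 * (N:ℝ)^2 * Qen ((A ∪ B)ᶜ) f
        ≤ (2 * (N:ℝ)^2 / ε) * Dform N g βp η A B σA f := by
      rw [div_mul_eq_mul_div, le_div_iff₀ hε]
      nlinarith
    nlinarith [mul_le_mul_of_nonneg_right hC h0.le]

lemma gap_nonneg : 0 ≤ gap N g βp η A B σA := by
  unfold gap
  set S := {r : ℝ | ∃ f : (Fin N → Bool) → ℝ,
    dependsOn f ((A ∪ B)ᶜ) ∧ (∃ σ τ : Fin N → Bool, f σ ≠ f τ) ∧
    r = gcov N g βp η A B σA f f / Dform N g βp η A B σA f} with hS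
  by_cases hne : S.Nonempty
  · obtain ⟨r, hr⟩ := hne
    have h0 : 0 ≤ r := by
      obtain ⟨f, -, -, rfl⟩ := hr
      exact div_nonneg (gcov_self_nonneg g βp η A B σA f) (Dform_nonneg g βp η A B σA f)
    exact le_trans h0 (le_csSup (gapSet_bddAbove g βp η A B σA) hr)
  · rw [Set.not_nonempty_iff_eq_empty.1 hne, Real.sSup_empty]

lemma gcov_le_gap_mul_Dform (f : (Fin N → Bool) → ℝ) (hdep : dependsOn f ((A ∪ B)ᶜ)) :
    gcov N g βp η A B σA f f ≤ gap N g βp η A B σA * Dform N g βp η A B σA f := by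
  by_cases hnc : ∃ σ τ : Fin N → Bool, f σ ≠ f τ
  · have hmem : gcov N g βp η A B σA f f / Dform N g βp η A B σA f
        ∈ {r : ℝ | ∃ f : (Fin N → Bool) → ℝ,
          dependsOn f ((A ∪ B)ᶜ) ∧ (∃ σ τ : Fin N → Bool, f σ ≠ f τ) ∧
          r = gcov N g βp η A B σA f f / Dform N g βp η A B σA f} := ⟨f, hdep, hnc, rfl⟩
    have hle : gcov N g βp η A B σA f f / Dform N g βp η A B σA f ≤ gap N g βp η A B σA :=
      le_csSup (gapSet_bddAbove g βp η A B σA) hmem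
    rcases (Dform_nonneg g βp η A B σA f).eq_or_lt with h0 | h0
    · obtain ⟨ε, hε, hD⟩ := Dform_ge g βp η A B σA
      have h2 := hD f
      have hQ := Qen_nonneg ((A ∪ B)ᶜ) f
      have hQ0 : Qen ((A ∪ B)ᶜ) f = 0 := le_antisymm (by nlinarith) hQ
      have h1 := gcov_self_le g βp η A B σA f hdep
      rw [hQ0] at h1
      have h3 := gcov_self_nonneg g βp η A B σA f
      have h4 : gcov N g βp η A B σA f f = 0 := le_antisymm (by linarith) h3
      rw [h4, ← h0, mul_zero]
    · have := (div_le_iff₀ h0).1 hle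
      linarith
  · push_neg at hnc
    have hc : ∀ σ, f σ = f (fun _ => true) := fun σ => hnc σ _
    have h1 : gibbs N g βp η A B σA f = f (fun _ => true) := by
      rw [gibbs_congr g βp η A B σA (G := fun _ => f (fun _ => true)) hc]
      exact gibbs_const g βp η A B σA _
    have h2 : gibbs N g βp η A B σA (fun σ => f σ * f σ)
        = f (fun _ => true) * f (fun _ => true) := by
      rw [gibbs_congr g βp η A B σA
        (G := fun _ => f (fun _ => true) * f (fun _ => true)) (fun σ => by rw [hc σ])]
      exact gibbs_const g βp η A B σA _
    have h0 : gcov N g βp η A B σA f f = 0 := by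
      unfold gcov
      rw [h1, h2]
      ring
    rw [h0]
    exact mul_nonneg (gap_nonneg g βp η A B σA) (Dform_nonneg g βp η A B σA f)

lemma aSubSet_bddAbove (k : ℕ) : BddAbove {r : ℝ | ∃ (A B : Finset (Fin N)) (σA : Fin N → Bool),
    Disjoint A B ∧ (A ∪ B).card = k ∧ r = gap N g βp η A B σA} := by
  apply Set.Finite.bddAbove
  apply Set.Finite.subset (Set.finite_range
    (fun x : Finset (Fin N) × Finset (Fin N) × (Fin N → Bool) => gap N g βp η x.1 x.2.1 x.2.2))
  rintro r ⟨A, B, σA, -, -, rfl⟩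
  exact ⟨(A, B, σA), rfl⟩

lemma gap_le_aSub {k : ℕ} (hd : Disjoint A B) (hc : (A ∪ B).card = k) :
    gap N g βp η A B σA ≤ aSub N g βp η k :=
  le_csSup (aSubSet_bddAbove g βp η k) ⟨A, B, σA, hd, hc, rfl⟩

end CondLemma

theorem conditioning_lemma'
    (N : ℕ) (g : (p : ℕ) → (Fin p → Fin N) → ℝ) (βp : ℕ → ℝ) (η : Fin N → ℝ)
    (A B : Finset (Fin N)) (hAB : Disjoint A B) (k : ℕ) (hcard : (A ∪ B).card = k)
    (hk : k + 2 ≤ N) (σA : Fin N → Bool)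
    (f : (Fin N → Bool) → ℝ) (hf : dependsOn f ((A ∪ B)ᶜ)) :
    gcov N g βp η A B σA f f ≤
      (1 - 1 / ((N : ℝ) - k)) * aSub N g βp η (k + 1) * Dform N g βp η A B σA f +
        (1 / ((N : ℝ) - k)) * ∑ j ∈ (A ∪ B)ᶜ,
          gcov N g βp η A B σA f (fun σ => spinVal (σ j)) ^ 2 /
            (1 - mag N g βp η A B σA j ^ 2) := by
  classical
  have hkN : k ≤ N := by omega
  have hNk : ((A ∪ B)ᶜ : Finset (Fin N)).card = N - k := by
    rw [Finset.card_compl, hcard, Fintype.card_fin]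
  have hcast : ((N : ℝ) - k) = ((N - k : ℕ) : ℝ) := by
    rw [Nat.cast_sub hkN]
  have hnpos : (0:ℝ) < ((N - k : ℕ) : ℝ) := by
    have : 2 ≤ N - k := by omega
    exact_mod_cast Nat.lt_of_lt_of_le Nat.zero_lt_two this
  set aS := aSub N g βp η (k + 1) with haS
  -- nonnegativity of aS
  have haS0 : 0 ≤ aS := by
    obtain ⟨j, hj⟩ : ((A ∪ B)ᶜ : Finset (Fin N)).Nonempty := by
      rw [← Finset.card_pos, hNk]; omega
    have hjAB : j ∉ A ∪ B := Finset.mem_compl.1 hj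
    have hd' : Disjoint (insert j A) B := by
      rw [Finset.disjoint_insert_left]
      exact ⟨fun h => hjAB (Finset.mem_union_right A h), hAB⟩
    have hc' : ((insert j A) ∪ B).card = k + 1 := by
      rw [Finset.insert_union, Finset.card_insert_of_notMem hjAB, hcard]
    exact le_trans (gap_nonneg g βp η (insert j A) B σA)
      (gap_le_aSub g βp η (insert j A) B σA hd' hc')
  -- the per-site estimate
  have key : ∀ j ∈ (A ∪ B)ᶜ,
      gcov N g βp η A B σA f f
        ≤ aS * (Dform N g βp η A B σA f
            - gibbs N g βp η A B σA
                (fun σ => (Real.cosh (cavity N g βp η A B σA j σ))⁻¹ ^ 2 * dd j f σ ^ 2))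
          + gcov N g βp η A B σA f (fun σ => spinVal (σ j)) ^ 2 /
              (1 - mag N g βp η A B σA j ^ 2) := by
    intro j hj
    have hjAB : j ∉ A ∪ B := Finset.mem_compl.1 hj
    have hjA : j ∉ A := fun h => hjAB (Finset.mem_union_left B h)
    have hd' : Disjoint (insert j A) B := by
      rw [Finset.disjoint_insert_left]
      exact ⟨fun h => hjAB (Finset.mem_union_right A h), hAB⟩
    have hc' : ((insert j A) ∪ B).card = k + 1 := by
      rw [Finset.insert_union, Finset.card_insert_of_notMem hjAB, hcard]
    have hdep : ∀ b : Bool, dependsOn (fun σ => f (Function.update σ j b))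
        (((insert j A) ∪ B)ᶜ) := by
      intro b σ τ h
      apply hf
      intro i hi
      rcases eq_or_ne i j with rfl | hij
      · rw [Function.update_self, Function.update_self]
      · rw [Function.update_of_ne hij, Function.update_of_ne hij]
        apply h
        rw [Finset.insert_union, Finset.compl_insert, Finset.mem_erase]
        exact ⟨hij, hi⟩
    have hvb : ∀ b : Bool,
        gcov N g βp η (insert j A) B (Function.update σA j b)
            (fun σ => f (Function.update σ j b)) (fun σ => f (Function.update σ j b))
          ≤ aS * Dform N g βp η (insert j A) B (Function.update σA j b)
              (fun σ => f (Function.update σ j b)) := by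
      intro b
      calc gcov N g βp η (insert j A) B (Function.update σA j b)
            (fun σ => f (Function.update σ j b)) (fun σ => f (Function.update σ j b))
          ≤ gap N g βp η (insert j A) B (Function.update σA j b) *
              Dform N g βp η (insert j A) B (Function.update σA j b)
                (fun σ => f (Function.update σ j b)) :=
            gcov_le_gap_mul_Dform g βp η (insert j A) B (Function.update σA j b) _ (hdep b)
        _ ≤ aS * Dform N g βp η (insert j A) B (Function.update σA j b)
              (fun σ => f (Function.update σ j b)) :=
            mul_le_mul_of_nonneg_right
              (gap_le_aSub g βp η (insert j A) B (Function.update σA j b) hd' hc')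
              (Dform_nonneg g βp η (insert j A) B (Function.update σA j b) _)
    have hvar := cond_variance g βp η A B σA j hjA f
    have hdec := dform_decomp g βp η A B σA j hj f
    have h5 := mul_le_mul_of_nonneg_left (hvb true) (wgt_pos g βp η A B σA j true).le
    have h6 := mul_le_mul_of_nonneg_left (hvb false) (wgt_pos g βp η A B σA j false).le
    have h7 : aS * (wgt g βp η A B σA j true *
        Dform N g βp η (insert j A) B (Function.update σA j true)
          (fun σ => f (Function.update σ j true))
        + wgt g βp η A B σA j false *
          Dform N g βp η (insert j A) B (Function.update σA j false)
            (fun σ => f (Function.update σ j false)))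
        = aS * (Dform N g βp η A B σA f
            - gibbs N g βp η A B σA
                (fun σ => (Real.cosh (cavity N g βp η A B σA j σ))⁻¹ ^ 2 * dd j f σ ^ 2)) := by
      rw [hdec]
    nlinarith [h5, h6, h7, hvar]
  -- sum the per-site estimates
  have hsum := Finset.sum_le_sum key
  rw [Finset.sum_const, hNk, nsmul_eq_mul] at hsum
  have hGsum : ∑ j ∈ (A ∪ B)ᶜ, gibbs N g βp η A B σA
      (fun σ => (Real.cosh (cavity N g βp η A B σA j σ))⁻¹ ^ 2 * dd j f σ ^ 2)
      = Dform N g βp η A B σA f := rfl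
  have hRHS : ∑ j ∈ (A ∪ B)ᶜ, (aS * (Dform N g βp η A B σA f
      - gibbs N g βp η A B σA
          (fun σ => (Real.cosh (cavity N g βp η A B σA j σ))⁻¹ ^ 2 * dd j f σ ^ 2))
      + gcov N g βp η A B σA f (fun σ => spinVal (σ j)) ^ 2 /
          (1 - mag N g βp η A B σA j ^ 2))
      = aS * (((N - k : ℕ) : ℝ) - 1) * Dform N g βp η A B σA f
        + ∑ j ∈ (A ∪ B)ᶜ, gcov N g βp η A B σA f (fun σ => spinVal (σ j)) ^ 2 /
            (1 - mag N g βp η A B σA j ^ 2) := by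
    rw [Finset.sum_add_distrib]
    congr 1
    simp_rw [mul_sub]
    rw [Finset.sum_sub_distrib, Finset.sum_const, hNk, nsmul_eq_mul, ← Finset.mul_sum, hGsum]
    ring
  rw [hRHS] at hsum
  rw [hcast]
  set n : ℝ := ((N - k : ℕ) : ℝ)
  set D := Dform N g βp η A B σA f
  set T := ∑ j ∈ (A ∪ B)ᶜ, gcov N g βp η A B σA f (fun σ => spinVal (σ j)) ^ 2 /
      (1 - mag N g βp η A B σA j ^ 2)
  calc gcov N g βp η A B σA f f = (n * gcov N g βp η A B σA f f) / n := by
        field_simp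
    _ ≤ (aS * (n - 1) * D + T) / n := by
        apply div_le_div_of_nonneg_right hsum hnpos.le
    _ = (1 - 1 / n) * aS * D + (1 / n) * T := by
        rw [div_eq_iff hnpos.ne']
        field_simp
        try ring
        try exact Or.inl trivial

theorem conditioning_lemma
    (N : ℕ) (g : (p : ℕ) → (Fin p → Fin N) → ℝ) (βp : ℕ → ℝ) (η : Fin N → ℝ)
    (hβp : ∀ p, 0 ≤ βp p)
    (hβsum : Summable fun p : ℕ =>
      if 2 ≤ p then Real.sqrt ((p : ℝ) ^ 3 * Real.log p) * βp p else 0)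
    (hg0 : ∀ (p : ℕ) (t : Fin p → Fin N), ¬ Function.Injective t → g p t = 0)
    (hH : HamSummable N g βp)
    (A B : Finset (Fin N)) (hAB : Disjoint A B) (k : ℕ) (hcard : (A ∪ B).card = k)
    (hk : k + 2 ≤ N) (σA : Fin N → Bool)
    (f : (Fin N → Bool) → ℝ) (hf : dependsOn f ((A ∪ B)ᶜ)) :
    gcov N g βp η A B σA f f ≤
      (1 - 1 / ((N : ℝ) - k)) * aSub N g βp η (k + 1) * Dform N g βp η A B σA f +
        (1 / ((N : ℝ) - k)) * ∑ j ∈ (A ∪ B)ᶜ,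
          gcov N g βp η A B σA f (fun σ => spinVal (σ j)) ^ 2 /
            (1 - mag N g βp η A B σA j ^ 2) := by
  exact conditioning_lemma' N g βp η A B hAB k hcard hk σA f hf
end

section
/- Let A, B ⊂ {1,…,N} be disjoint with |A∪B| = k < N and fix σ_A ∈ {−1,1}^A. Then for every f : Σ_{N−k} → ℝ, Σ_{i∉A∪B} ⟨σ_i;f⟩²_{[A,B]} / (1 − (m_i^{[A,B]})²) ≤ ‖(Λ^{[A,B]})^{1/2} M^{[A,B]} (Λ^{[A,B]})^{1/2}‖ · ⟨f;f⟩_{[A,B]}. -/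
open Finset MeasureTheory ProbabilityTheory

noncomputable section CorrAux

variable {X : Type} [Fintype X] [Nonempty X]

def wexp (w : X → ℝ) (f : X → ℝ) : ℝ := (∑ σ, f σ * w σ) / ∑ σ, w σ

def wcov (w : X → ℝ) (f h : X → ℝ) : ℝ :=
  wexp w (fun σ => f σ * h σ) - wexp w f * wexp w h

lemma wZ_pos {w : X → ℝ} (hw : ∀ σ, 0 < w σ) : 0 < ∑ σ : X, w σ :=
  Finset.sum_pos (fun σ _ => hw σ) Finset.univ_nonempty

lemma wexp_sum (w : X → ℝ) {I : Type} (s : Finset I) (c : I → ℝ) (F : I → X → ℝ) :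
    wexp w (fun σ => ∑ i ∈ s, c i * F i σ) = ∑ i ∈ s, c i * wexp w (F i) := by
  simp only [wexp]
  have key : ∑ σ : X, (∑ i ∈ s, c i * F i σ) * w σ
      = ∑ i ∈ s, c i * ∑ σ : X, F i σ * w σ :=
    calc ∑ σ : X, (∑ i ∈ s, c i * F i σ) * w σ
        = ∑ σ : X, ∑ i ∈ s, c i * (F i σ * w σ) := by
          refine Finset.sum_congr rfl fun σ _ => ?_
          rw [Finset.sum_mul]
          exact Finset.sum_congr rfl fun i _ => by ring
      _ = ∑ i ∈ s, ∑ σ : X, c i * (F i σ * w σ) := Finset.sum_comm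
      _ = ∑ i ∈ s, c i * ∑ σ : X, F i σ * w σ := by
          exact Finset.sum_congr rfl fun i _ => by rw [Finset.mul_sum]
  rw [key, Finset.sum_div]
  exact Finset.sum_congr rfl fun i _ => mul_div_assoc _ _ _

lemma wcov_sum (w : X → ℝ) {I : Type} (s : Finset I) (c : I → ℝ) (F : I → X → ℝ)
    (f : X → ℝ) :
    wcov w (fun σ => ∑ i ∈ s, c i * F i σ) f = ∑ i ∈ s, c i * wcov w (F i) f := by
  unfold wcov
  have h1 : (fun σ => (∑ i ∈ s, c i * F i σ) * f σ)
      = fun σ => ∑ i ∈ s, c i * (F i σ * f σ) := by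
    funext σ; rw [Finset.sum_mul]; exact Finset.sum_congr rfl fun i _ => by ring
  rw [h1, wexp_sum, wexp_sum, Finset.sum_mul, ← Finset.sum_sub_distrib]
  exact Finset.sum_congr rfl fun i _ => by ring

lemma wcov_symm (w : X → ℝ) (f h : X → ℝ) : wcov w f h = wcov w h f := by
  unfold wcov
  have : (fun σ => f σ * h σ) = fun σ => h σ * f σ := by funext σ; ring
  rw [this]; ring

lemma wcov_eq {w : X → ℝ} (hw : ∀ σ, 0 < w σ) (f h : X → ℝ) :
    wcov w f h = ∑ σ, (w σ / ∑ τ, w τ) * ((f σ - wexp w f) * (h σ - wexp w h)) := by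
  have hZ : (0:ℝ) < ∑ τ, w τ := wZ_pos hw
  set Z := ∑ τ : X, w τ with hZdef
  set a := wexp w f with ha
  set b := wexp w h with hb
  have expand : ∀ σ : X, (w σ / Z) * ((f σ - a) * (h σ - b))
      = f σ * h σ * w σ / Z - b * (f σ * w σ / Z) - a * (h σ * w σ / Z)
        + a * b * (w σ / Z) := by
    intro σ; field_simp; ring
  rw [Finset.sum_congr rfl fun σ _ => expand σ]
  rw [Finset.sum_add_distrib, Finset.sum_sub_distrib, Finset.sum_sub_distrib,
    ← Finset.sum_div, ← Finset.mul_sum, ← Finset.mul_sum, ← Finset.mul_sum,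
    ← Finset.sum_div, ← Finset.sum_div, ← Finset.sum_div]
  have hZZ : Z / Z = 1 := div_self hZ.ne'
  have hfa : (∑ σ : X, f σ * w σ) / Z = a := rfl
  have hhb : (∑ σ : X, h σ * w σ) / Z = b := rfl
  rw [hZZ, hfa, hhb]
  unfold wcov
  have : wexp w (fun σ => f σ * h σ) = (∑ σ : X, f σ * h σ * w σ) / Z := rfl
  rw [this]; ring

lemma wcov_self_nonneg {w : X → ℝ} (hw : ∀ σ, 0 < w σ) (f : X → ℝ) :
    0 ≤ wcov w f f := by
  rw [wcov_eq hw]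
  refine Finset.sum_nonneg fun σ _ => ?_
  exact mul_nonneg (div_nonneg (hw σ).le (wZ_pos hw).le) (mul_self_nonneg _)

lemma wcov_cauchy {w : X → ℝ} (hw : ∀ σ, 0 < w σ) (f h : X → ℝ) :
    (wcov w f h) ^ 2 ≤ wcov w f f * wcov w h h := by
  have hZ : (0:ℝ) < ∑ τ, w τ := wZ_pos hw
  rw [wcov_eq hw f h, wcov_eq hw f f, wcov_eq hw h h]
  set F : X → ℝ := fun σ => Real.sqrt (w σ / ∑ τ, w τ) * (f σ - wexp w f) with hF
  set H : X → ℝ := fun σ => Real.sqrt (w σ / ∑ τ, w τ) * (h σ - wexp w h) with hH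
  have hwZ : ∀ σ : X, (0:ℝ) ≤ w σ / ∑ τ, w τ := fun σ => div_nonneg (hw σ).le hZ.le
  have key : ∀ (u v : X → ℝ), ∀ σ : X,
      (w σ / ∑ τ, w τ) * ((u σ - wexp w u) * (v σ - wexp w v))
      = (Real.sqrt (w σ / ∑ τ, w τ) * (u σ - wexp w u))
        * (Real.sqrt (w σ / ∑ τ, w τ) * (v σ - wexp w v)) := by
    intro u v σ
    rw [show Real.sqrt (w σ / ∑ τ, w τ) * (u σ - wexp w u) *
        (Real.sqrt (w σ / ∑ τ, w τ) * (v σ - wexp w v))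
      = (Real.sqrt (w σ / ∑ τ, w τ) * Real.sqrt (w σ / ∑ τ, w τ))
        * ((u σ - wexp w u) * (v σ - wexp w v)) from by ring,
      Real.mul_self_sqrt (hwZ σ)]
  rw [Finset.sum_congr rfl fun σ _ => key f h σ,
    Finset.sum_congr rfl fun σ _ => key f f σ,
    Finset.sum_congr rfl fun σ _ => key h h σ]
  have e2 : ∀ σ : X, F σ * F σ = F σ ^ 2 := fun σ => (sq (F σ)).symm
  have e3 : ∀ σ : X, H σ * H σ = H σ ^ 2 := fun σ => (sq (H σ)).symm
  rw [Finset.sum_congr rfl fun σ _ => e2 σ, Finset.sum_congr rfl fun σ _ => e3 σ]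
  exact Finset.sum_mul_sq_le_sq_mul_sq _ _ _

lemma wexp_abs_le_one {w : X → ℝ} (hw : ∀ σ, 0 < w σ) {f : X → ℝ}
    (hf : ∀ σ, |f σ| ≤ 1) : |wexp w f| ≤ 1 := by
  have hZ : (0:ℝ) < ∑ τ, w τ := wZ_pos hw
  unfold wexp
  rw [abs_div, abs_of_pos hZ, div_le_one hZ]
  calc |∑ σ : X, f σ * w σ| ≤ ∑ σ : X, |f σ * w σ| := Finset.abs_sum_le_sum_abs _ _
    _ ≤ ∑ σ : X, w σ := by
        refine Finset.sum_le_sum fun σ _ => ?_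
        rw [abs_mul, abs_of_pos (hw σ)]
        nlinarith [hf σ, hw σ, abs_nonneg (f σ)]

end CorrAux

theorem corr_matrix_bound
    (N : ℕ) (g : (p : ℕ) → (Fin p → Fin N) → ℝ) (βp : ℕ → ℝ) (η : Fin N → ℝ)
    (hβp : ∀ p, 0 ≤ βp p)
    (hβsum : Summable fun p : ℕ =>
      if 2 ≤ p then Real.sqrt ((p : ℝ) ^ 3 * Real.log p) * βp p else 0)
    (hg0 : ∀ (p : ℕ) (t : Fin p → Fin N), ¬ Function.Injective t → g p t = 0)
    (hH : HamSummable N g βp)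
    (A B : Finset (Fin N)) (hAB : Disjoint A B) (k : ℕ) (hcard : (A ∪ B).card = k)
    (hk : k < N) (σA : Fin N → Bool)
    (f : (Fin N → Bool) → ℝ) (hf : dependsOn f ((A ∪ B)ᶜ)) :
    ∑ i ∈ (A ∪ B)ᶜ,
        gcov N g βp η A B σA (fun σ => spinVal (σ i)) f ^ 2 /
          (1 - mag N g βp η A B σA i ^ 2) ≤
      opNorm (conjCorr N g βp η A B σA) * gcov N g βp η A B σA f f := by
  classical
  set w : (Fin N → Bool) → ℝ := fun σ => Real.exp (ham N g βp η A B σA σ) with hwdef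
  have hw : ∀ σ, 0 < w σ := fun σ => Real.exp_pos _
  have hgcov : ∀ F H : (Fin N → Bool) → ℝ,
      gcov N g βp η A B σA F H = wcov w F H := fun F H => rfl
  -- magnetizations are bounded
  have hmag : ∀ i : Fin N, mag N g βp η A B σA i ^ 2 ≤ 1 := by
    intro i
    have hb : ∀ σ : Fin N → Bool, |spinVal (σ i)| ≤ 1 := by
      intro σ; unfold spinVal; split <;> norm_num
    have h1 : |wexp w (fun σ => spinVal (σ i))| ≤ 1 := wexp_abs_le_one hw hb
    have h2 : mag N g βp η A B σA i = wexp w (fun σ => spinVal (σ i)) := rfl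
    rw [h2, sq_le_one_iff_abs_le_one]
    exact h1
  set lam : {i : Fin N // i ∈ (A ∪ B)ᶜ} → ℝ :=
    fun i => Real.sqrt (1 - mag N g βp η A B σA i.1 ^ 2)⁻¹ with hlam
  set u : {i : Fin N // i ∈ (A ∪ B)ᶜ} → ℝ :=
    fun i => wcov w (fun σ => spinVal (σ i.1)) f with hu
  set v : {i : Fin N // i ∈ (A ∪ B)ᶜ} → ℝ := fun i => lam i * u i with hv
  set c : {i : Fin N // i ∈ (A ∪ B)ᶜ} → ℝ := fun i => lam i * v i with hc
  set C := conjCorr N g βp η A B σA with hCdef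
  -- entries of the conjugated correlation matrix
  have hC : ∀ i j : {i : Fin N // i ∈ (A ∪ B)ᶜ},
      C i j = lam i * wcov w (fun σ => spinVal (σ i.1)) (fun σ => spinVal (σ j.1)) * lam j := by
    intro i j
    rw [hCdef]
    show (lambdaHalf N g βp η A B σA * corrM N g βp η A B σA * lambdaHalf N g βp η A B σA) i j = _
    unfold lambdaHalf
    rw [Matrix.mul_diagonal, Matrix.diagonal_mul]
    rfl
  -- rewrite the LHS as a sum of squares
  have hL : ∑ i ∈ (A ∪ B)ᶜ,
      gcov N g βp η A B σA (fun σ => spinVal (σ i)) f ^ 2 /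
        (1 - mag N g βp η A B σA i ^ 2)
      = ∑ i : {i : Fin N // i ∈ (A ∪ B)ᶜ}, v i ^ 2 := by
    rw [← Finset.sum_coe_sort ((A ∪ B)ᶜ)
      (fun i => gcov N g βp η A B σA (fun σ => spinVal (σ i)) f ^ 2 /
        (1 - mag N g βp η A B σA i ^ 2))]
    refine Finset.sum_congr rfl fun i _ => ?_
    have h1 : (0:ℝ) ≤ (1 - mag N g βp η A B σA i.1 ^ 2)⁻¹ :=
      inv_nonneg.mpr (by linarith [hmag i.1])
    rw [hv, hlam, hu, hgcov]
    rw [mul_pow, Real.sq_sqrt h1, div_eq_mul_inv, mul_comm]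
  rw [hL]
  -- the test function G
  set G : (Fin N → Bool) → ℝ :=
    fun σ => ∑ i : {i : Fin N // i ∈ (A ∪ B)ᶜ}, c i * spinVal (σ i.1) with hG
  have hGf : wcov w G f = ∑ i : {i : Fin N // i ∈ (A ∪ B)ᶜ}, v i ^ 2 := by
    rw [hG, wcov_sum w univ c (fun i σ => spinVal (σ i.1)) f]
    refine Finset.sum_congr rfl fun i _ => ?_
    rw [hc, hv, hu]
    ring
  have hGG : wcov w G G
      = ∑ i : {i : Fin N // i ∈ (A ∪ B)ᶜ}, v i * (C.mulVec v) i := by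
    rw [hG, wcov_sum w univ c (fun i σ => spinVal (σ i.1))]
    refine Finset.sum_congr rfl fun i _ => ?_
    rw [wcov_symm w _ (fun σ => ∑ j : {i : Fin N // i ∈ (A ∪ B)ᶜ}, c j * spinVal (σ j.1)),
      wcov_sum w univ c (fun j σ => spinVal (σ j.1)) (fun σ => spinVal (σ i.1))]
    have hmv : (C.mulVec v) i = ∑ j : {i : Fin N // i ∈ (A ∪ B)ᶜ}, C i j * v j := rfl
    rw [hmv, Finset.mul_sum, Finset.mul_sum]
    refine Finset.sum_congr rfl fun j _ => ?_
    rw [hC i j,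
      wcov_symm w (fun σ => spinVal (σ j.1)) (fun σ => spinVal (σ i.1))]
    rw [hc]
    ring
  -- Euclidean-space estimate
  set T := Matrix.toEuclideanCLM (𝕜 := ℝ) C with hT
  set V : EuclideanSpace ℝ {i : Fin N // i ∈ (A ∪ B)ᶜ} :=
    (WithLp.equiv 2 _).symm v with hV
  have hTV : T V = (WithLp.equiv 2 _).symm (C.mulVec v) := by
    rw [hV, hT, WithLp.equiv_symm_apply, Matrix.toEuclideanCLM_toLp]
  have hinner : (inner ℝ V (T V) : ℝ)
      = ∑ i : {i : Fin N // i ∈ (A ∪ B)ᶜ}, v i * (C.mulVec v) i := by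
    rw [hTV, hV]
    simp [PiLp.inner_apply, RCLike.inner_apply, WithLp.equiv_symm_apply, mul_comm]
  have hVn : ‖V‖ ^ 2 = ∑ i : {i : Fin N // i ∈ (A ∪ B)ᶜ}, v i ^ 2 := by
    rw [EuclideanSpace.norm_eq, Real.sq_sqrt (Finset.sum_nonneg fun i _ => sq_nonneg _)]
    refine Finset.sum_congr rfl fun i _ => ?_
    rw [hV]
    simp [WithLp.equiv_symm_apply, sq_abs]
  set s := ∑ i : {i : Fin N // i ∈ (A ∪ B)ᶜ}, v i ^ 2 with hs
  have hs0 : 0 ≤ s := Finset.sum_nonneg fun i _ => sq_nonneg _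
  have hcovff : 0 ≤ wcov w f f := wcov_self_nonneg hw f
  have hbound : wcov w G G ≤ ‖T‖ * s := by
    rw [hGG, ← hinner]
    calc (inner ℝ V (T V) : ℝ) ≤ ‖V‖ * ‖T V‖ := real_inner_le_norm V (T V)
      _ ≤ ‖V‖ * (‖T‖ * ‖V‖) :=
          mul_le_mul_of_nonneg_left (T.le_opNorm V) (norm_nonneg V)
      _ = ‖T‖ * ‖V‖ ^ 2 := by ring
      _ = ‖T‖ * s := by rw [hVn]
  have hcs : s ^ 2 ≤ (‖T‖ * s) * wcov w f f := by
    calc s ^ 2 = (wcov w G f) ^ 2 := by rw [hGf]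
      _ ≤ wcov w G G * wcov w f f := wcov_cauchy hw G f
      _ ≤ (‖T‖ * s) * wcov w f f := mul_le_mul_of_nonneg_right hbound hcovff
  have hop : opNorm C = ‖T‖ := rfl
  have hff : gcov N g βp η A B σA f f = wcov w f f := rfl
  rw [hop, hff]
  rcases eq_or_lt_of_le hs0 with h0 | hpos
  · rw [← h0]
    exact mul_nonneg (norm_nonneg T) hcovff
  · have h1 : s * s ≤ (‖T‖ * wcov w f f) * s := by nlinarith
    exact le_of_mul_le_mul_right h1 hpos
end

section
/- Assume the couplings satisfy the Ω-condition. Let A, B ⊂ {1,…,N} be disjoint with |A∪B| = k, fix σ_A ∈ {−1,1}^A, and fix σ ∈ Σ_{N−k}. Then: (i) for every integer q ≥ 2, max( max_{i∉A∪B} Σ_{j∉A∪B} |∂_i B_j^{[A,B]}(σ)|^q , max_{j∉A∪B} Σ_{i∉A∪B} |∂_i B_j^{[A,B]}(σ)|^q ) ≤ (5β)^q; and (ii) for every integer q ≥ 1, the matrix X_q^{[A,B]} with entries (∂_i B_j^{[A,B]}(σ))^q, i,j ∉ A∪B, has operator norm at most (5β)^q. -/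
open Finset MeasureTheory ProbabilityTheory

section OpNormHelpers

open Finset Matrix

lemma euclid_norm_sq' {n : Type} [Fintype n] (x : EuclideanSpace ℝ n) :
    ‖x‖ ^ 2 = ∑ i, x i ^ 2 := by
  rw [EuclideanSpace.norm_eq, Real.sq_sqrt (by positivity)]
  simp [sq_abs]

lemma toE_apply' {n : Type} [Fintype n] [DecidableEq n] (M : Matrix n n ℝ)
    (x : EuclideanSpace ℝ n) (i : n) :
    (Matrix.toEuclideanCLM (𝕜 := ℝ) M x) i = ∑ j, M i j * x j := rfl

lemma col_sq_le' {n : Type} [Fintype n] [DecidableEq n] (M : Matrix n n ℝ) (j : n) :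
    ∑ i, (M i j) ^ 2 ≤ opNorm M ^ 2 := by
  have h := (Matrix.toEuclideanCLM (𝕜 := ℝ) M).le_opNorm (EuclideanSpace.single j (1:ℝ))
  rw [EuclideanSpace.norm_single, norm_one, mul_one] at h
  have h2 : ∑ i, (M i j) ^ 2 = ‖Matrix.toEuclideanCLM (𝕜 := ℝ) M
      (EuclideanSpace.single j (1:ℝ))‖ ^ 2 := by
    rw [euclid_norm_sq']
    refine Finset.sum_congr rfl fun i _ => ?_
    rw [toE_apply']
    rw [Finset.sum_eq_single j]
    · simp
    · intro b _ hb; simp [EuclideanSpace.single_apply, hb]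
    · simp
  rw [h2]
  exact pow_le_pow_left₀ (norm_nonneg _) h 2

open scoped Matrix.Norms.L2Operator in
lemma opNorm_transpose' {n : Type} [Fintype n] [DecidableEq n] (M : Matrix n n ℝ) :
    opNorm Mᵀ = opNorm M := by
  have h1 : Mᵀ = Mᴴ := by
    ext i j; simp [Matrix.conjTranspose_apply]
  have h2 := Matrix.l2_opNorm_conjTranspose (𝕜 := ℝ) M
  rw [Matrix.cstar_norm_def, Matrix.cstar_norm_def] at h2
  rw [h1]
  exact h2

lemma schur_bound' {n : Type} [Fintype n] [DecidableEq n] (M : Matrix n n ℝ) (r : ℝ) (hr : 0 ≤ r)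
    (hrow : ∀ i, ∑ j, |M i j| ≤ r) (hcol : ∀ j, ∑ i, |M i j| ≤ r) :
    opNorm M ≤ r := by
  apply ContinuousLinearMap.opNorm_le_bound _ hr
  intro x
  have key : ‖Matrix.toEuclideanCLM (𝕜 := ℝ) M x‖ ^ 2 ≤ (r * ‖x‖) ^ 2 := by
    rw [euclid_norm_sq']
    calc ∑ i, (Matrix.toEuclideanCLM (𝕜 := ℝ) M x) i ^ 2
        ≤ ∑ i, (∑ j, |M i j|) * (∑ j, |M i j| * x j ^ 2) := by
          refine Finset.sum_le_sum fun i _ => ?_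
          rw [toE_apply']
          have h1 : (∑ j, M i j * x j) ^ 2 ≤ (∑ j, |M i j| * |x j|) ^ 2 := by
            rw [← sq_abs]
            refine pow_le_pow_left₀ (abs_nonneg _) ?_ 2
            refine (Finset.abs_sum_le_sum_abs _ _).trans ?_
            refine le_of_eq (Finset.sum_congr rfl fun j _ => abs_mul _ _)
          refine h1.trans ?_
          have h2 : ∀ j, |M i j| * |x j| = Real.sqrt |M i j| * (Real.sqrt |M i j| * |x j|) := by
            intro j
            rw [← mul_assoc, Real.mul_self_sqrt (abs_nonneg _)]
          calc (∑ j, |M i j| * |x j|) ^ 2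
              = (∑ j, Real.sqrt |M i j| * (Real.sqrt |M i j| * |x j|)) ^ 2 := by
                exact congrArg (· ^ 2) (Finset.sum_congr rfl fun j _ => h2 j)
            _ ≤ (∑ j, Real.sqrt |M i j| ^ 2) * ∑ j, (Real.sqrt |M i j| * |x j|) ^ 2 :=
                Finset.sum_mul_sq_le_sq_mul_sq _ _ _
            _ = (∑ j, |M i j|) * ∑ j, |M i j| * x j ^ 2 := by
                congr 1
                · exact Finset.sum_congr rfl fun j _ => Real.sq_sqrt (abs_nonneg _)
                · refine Finset.sum_congr rfl fun j _ => ?_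
                  rw [mul_pow, Real.sq_sqrt (abs_nonneg _), sq_abs]
      _ ≤ ∑ i, r * (∑ j, |M i j| * x j ^ 2) := by
          refine Finset.sum_le_sum fun i _ => ?_
          refine mul_le_mul_of_nonneg_right (hrow i) ?_
          exact Finset.sum_nonneg fun j _ => mul_nonneg (abs_nonneg _) (sq_nonneg _)
      _ = r * ∑ j, (∑ i, |M i j|) * x j ^ 2 := by
          rw [← Finset.mul_sum, Finset.sum_comm]
          congr 1
          exact Finset.sum_congr rfl fun j _ => (Finset.sum_mul _ _ _).symm
      _ ≤ r * ∑ j, r * x j ^ 2 := by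
          refine mul_le_mul_of_nonneg_left ?_ hr
          exact Finset.sum_le_sum fun j _ =>
            mul_le_mul_of_nonneg_right (hcol j) (sq_nonneg _)
      _ = (r * ‖x‖) ^ 2 := by
          rw [← Finset.mul_sum, mul_pow, euclid_norm_sq']
          ring
  have h0 : 0 ≤ r * ‖x‖ := mul_nonneg hr (norm_nonneg _)
  nlinarith [norm_nonneg (Matrix.toEuclideanCLM (𝕜 := ℝ) M x)]

end OpNormHelpers

theorem cavity_derivative_bounds
    (N : ℕ) (g : (p : ℕ) → (Fin p → Fin N) → ℝ) (βp : ℕ → ℝ) (η : Fin N → ℝ)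
    (hβp : ∀ p, 0 ≤ βp p)
    (hβsum : Summable fun p : ℕ =>
      if 2 ≤ p then Real.sqrt ((p : ℝ) ^ 3 * Real.log p) * βp p else 0)
    (hg0 : ∀ (p : ℕ) (t : Fin p → Fin N), ¬ Function.Injective t → g p t = 0)
    (hH : HamSummable N g βp)
    (hΩ : OmegaCond N g βp η)
    (A B : Finset (Fin N)) (hAB : Disjoint A B) (k : ℕ) (hcard : (A ∪ B).card = k)
    (σA σ : Fin N → Bool) :
    (∀ q : ℕ, 2 ≤ q →
      (∀ i ∈ (A ∪ B)ᶜ, ∑ j ∈ (A ∪ B)ᶜ,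
          |dd i (cavity N g βp η A B σA j) σ| ^ q ≤ (5 * betaTot βp) ^ q) ∧
      (∀ j ∈ (A ∪ B)ᶜ, ∑ i ∈ (A ∪ B)ᶜ,
          |dd i (cavity N g βp η A B σA j) σ| ^ q ≤ (5 * betaTot βp) ^ q)) ∧
    ∀ q : ℕ, 1 ≤ q →
      opNorm (Matrix.of fun i j : {i : Fin N // i ∈ (A ∪ B)ᶜ} =>
          dd i.1 (cavity N g βp η A B σA j.1) σ ^ q) ≤ (5 * betaTot βp) ^ q := by
  classical
  set r : ℝ := 5 * betaTot βp with hrdef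
  have hβ0 : 0 ≤ betaTot βp := by
    refine tsum_nonneg fun p => ?_
    by_cases hp : 2 ≤ p
    · simp only [hp, if_true]
      exact mul_nonneg (Real.sqrt_nonneg _) (hβp p)
    · simp [hp]
  have hr : 0 ≤ r := by positivity
  set M := cavMatrix N g βp η A B σA σ with hMdef
  have hM : opNorm M ≤ r := hΩ A B hAB σA σ
  have hMT : opNorm M.transpose ≤ r := by rw [opNorm_transpose']; exact hM
  -- column square bounds
  have hcolsq : ∀ j, ∑ i, (M i j) ^ 2 ≤ r ^ 2 := fun j =>
    (col_sq_le' M j).trans (pow_le_pow_left₀ (norm_nonneg _) hM 2)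
  have hrowsq : ∀ i, ∑ j, (M i j) ^ 2 ≤ r ^ 2 := by
    intro i
    have := (col_sq_le' M.transpose i).trans (pow_le_pow_left₀ (norm_nonneg _) hMT 2)
    simpa [Matrix.transpose_apply] using this
  -- entrywise bound
  have hentry : ∀ i j, |M i j| ≤ r := by
    intro i j
    have h1 : (M i j) ^ 2 ≤ r ^ 2 :=
      le_trans (Finset.single_le_sum (f := fun i' => (M i' j) ^ 2)
        (fun _ _ => sq_nonneg _) (Finset.mem_univ i)) (hcolsq j)
    have := Real.sqrt_le_sqrt h1
    rwa [Real.sqrt_sq_eq_abs, Real.sqrt_sq hr] at this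
  -- q-th power row/column bounds (subtype sums)
  have hrowq : ∀ q : ℕ, 2 ≤ q → ∀ i, ∑ j, |M i j| ^ q ≤ r ^ q := by
    intro q hq i
    have hq2 : q - 2 + 2 = q := Nat.sub_add_cancel hq
    calc ∑ j, |M i j| ^ q = ∑ j, |M i j| ^ (q - 2) * (M i j) ^ 2 := by
          refine Finset.sum_congr rfl fun j _ => ?_
          rw [← sq_abs (M i j), ← pow_add, hq2]
      _ ≤ ∑ j, r ^ (q - 2) * (M i j) ^ 2 := by
          refine Finset.sum_le_sum fun j _ => ?_
          exact mul_le_mul_of_nonneg_right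
            (pow_le_pow_left₀ (abs_nonneg _) (hentry i j) _) (sq_nonneg _)
      _ = r ^ (q - 2) * ∑ j, (M i j) ^ 2 := by rw [Finset.mul_sum]
      _ ≤ r ^ (q - 2) * r ^ 2 :=
          mul_le_mul_of_nonneg_left (hrowsq i) (pow_nonneg hr _)
      _ = r ^ q := by rw [← pow_add, hq2]
  have hcolq : ∀ q : ℕ, 2 ≤ q → ∀ j, ∑ i, |M i j| ^ q ≤ r ^ q := by
    intro q hq j
    have hq2 : q - 2 + 2 = q := Nat.sub_add_cancel hq
    calc ∑ i, |M i j| ^ q = ∑ i, |M i j| ^ (q - 2) * (M i j) ^ 2 := by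
          refine Finset.sum_congr rfl fun i _ => ?_
          rw [← sq_abs (M i j), ← pow_add, hq2]
      _ ≤ ∑ i, r ^ (q - 2) * (M i j) ^ 2 := by
          refine Finset.sum_le_sum fun i _ => ?_
          exact mul_le_mul_of_nonneg_right
            (pow_le_pow_left₀ (abs_nonneg _) (hentry i j) _) (sq_nonneg _)
      _ = r ^ (q - 2) * ∑ i, (M i j) ^ 2 := by rw [Finset.mul_sum]
      _ ≤ r ^ (q - 2) * r ^ 2 :=
          mul_le_mul_of_nonneg_left (hcolsq j) (pow_nonneg hr _)
      _ = r ^ q := by rw [← pow_add, hq2]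
  have hMentry : ∀ (i j : {i : Fin N // i ∈ (A ∪ B)ᶜ}),
      M i j = dd i.1 (cavity N g βp η A B σA j.1) σ := fun i j => rfl
  constructor
  · intro q hq
    constructor
    · intro i hi
      have h := hrowq q hq ⟨i, hi⟩
      rw [← Finset.sum_coe_sort ((A ∪ B)ᶜ)
        (fun j => |dd i (cavity N g βp η A B σA j) σ| ^ q)]
      exact h
    · intro j hj
      have h := hcolq q hq ⟨j, hj⟩
      rw [← Finset.sum_coe_sort ((A ∪ B)ᶜ)
        (fun i => |dd i (cavity N g βp η A B σA j) σ| ^ q)]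
      exact h
  · intro q hq
    rcases eq_or_lt_of_le hq with h1 | h2
    · -- q = 1
      have hq1 : q = 1 := h1.symm
      subst hq1
      have hEq : (Matrix.of fun i j : {i : Fin N // i ∈ (A ∪ B)ᶜ} =>
          dd i.1 (cavity N g βp η A B σA j.1) σ ^ 1) = M := by
        ext i j
        simp [hMdef, cavMatrix]
      rw [hEq, pow_one]
      exact hM
    · -- q ≥ 2
      have hq2 : 2 ≤ q := h2
      refine schur_bound' _ _ (pow_nonneg hr q) ?_ ?_
      · intro i
        have h := hrowq q hq2 i
        refine le_trans (le_of_eq ?_) h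
        refine Finset.sum_congr rfl fun j _ => ?_
        rw [Matrix.of_apply, abs_pow, hMentry]
      · intro j
        have h := hcolq q hq2 j
        refine le_trans (le_of_eq ?_) h
        refine Finset.sum_congr rfl fun i _ => ?_
        rw [Matrix.of_apply, abs_pow, hMentry]
end
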